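/- arXiv:2401.08879 — 2 statements merged into one kernel-verified Lean document; each statement's English description precedes it below -/
import Mathlib

section
/- Each of the removal-based contribution function ctrb^r, the intrinsic-removal contribution function ctrb^{ri}, and the gradient-based contribution function ctrb^g violates the quantitative contribution existence principle with respect to the QE semantics and with respect to the EB semantics: for each of these two semantics there exist an acyclic QBAG G and an argument a ∈ A such that Σ_{x ∈ A∖{a}} ctrb_{G,a}(x) ≠ σ_G(a) − τ(a), where ctrb is ctrb^r, ctrb^{ri}, or ctrb^g. (A witness is the QBAG with A = {a, b, c}, τ(a) = 0.5, τ(b) = τ(c) = 1, and attacks (b,a), (c,a).) -/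
open Finset

/-- A quantitative bipolar argumentation graph (QBAG): a finite set of arguments,
an initial strength function, and attack and support relations. -/
structure QBAG where
  args : Finset ℕ
  tau : ℕ → ℝ
  att : Finset (ℕ × ℕ)
  supp : Finset (ℕ × ℕ)

namespace QBAG

/-- The edge relation of the underlying directed graph (attack or support). -/
def edge (G : QBAG) (x y : ℕ) : Prop := (x, y) ∈ G.att ∨ (x, y) ∈ G.supp

/-- Well-formedness: edges live on the arguments, attack and support are disjoint,
and initial strengths lie in [0,1]. -/
def WF (G : QBAG) : Prop :=
  (∀ p ∈ G.att, p.1 ∈ G.args ∧ p.2 ∈ G.args) ∧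
  (∀ p ∈ G.supp, p.1 ∈ G.args ∧ p.2 ∈ G.args) ∧
  Disjoint G.att G.supp ∧
  (∀ a ∈ G.args, G.tau a ∈ Set.Icc (0 : ℝ) 1)

/-- Acyclicity of the directed graph (A, Att ∪ Supp). -/
def Acyclic (G : QBAG) : Prop := ∀ x, ¬ Relation.TransGen G.edge x x

/-- Direct attackers of an argument. -/
def attackers (G : QBAG) (a : ℕ) : Finset ℕ :=
  (G.att.filter (fun p => p.2 = a)).image Prod.fst

/-- Direct supporters of an argument. -/
def supporters (G : QBAG) (a : ℕ) : Finset ℕ :=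
  (G.supp.filter (fun p => p.2 = a)).image Prod.fst

/-- Restriction G↓S of a QBAG to a subset S of the arguments. -/
def restrict (G : QBAG) (S : Finset ℕ) : QBAG where
  args := G.args ∩ S
  tau := G.tau
  att := G.att.filter (fun p => p.1 ∈ S ∧ p.2 ∈ S)
  supp := G.supp.filter (fun p => p.1 ∈ S ∧ p.2 ∈ S)

/-- G⁻: the QBAG G with every attack and support edge pointing into x removed. -/
def dropInto (G : QBAG) (x : ℕ) : QBAG where
  args := G.args
  tau := G.tau
  att := G.att.filter (fun p => p.2 ≠ x)
  supp := G.supp.filter (fun p => p.2 ≠ x)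

/-- G[x←ε]: the QBAG G with the initial strength of x replaced by ε. -/
def setTau (G : QBAG) (x : ℕ) (ε : ℝ) : QBAG where
  args := G.args
  tau := Function.update G.tau x ε
  att := G.att
  supp := G.supp

end QBAG

noncomputable section

/-- Sum aggregation. -/
def sumAgg (G : QBAG) (s : ℕ → ℝ) (a : ℕ) : ℝ :=
  (∑ y ∈ G.supporters a, s y) - (∑ y ∈ G.attackers a, s y)

/-- Product aggregation. -/
def prodAgg (G : QBAG) (s : ℕ → ℝ) (a : ℕ) : ℝ :=
  (∏ y ∈ G.attackers a, (1 - s y)) - (∏ y ∈ G.supporters a, (1 - s y))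

/-- Top aggregation. -/
def topAgg (G : QBAG) (s : ℕ → ℝ) (a : ℕ) : ℝ :=
  (G.supporters a).fold max 0 s - (G.attackers a).fold max 0 s

/-- h for the 2-Max(1) influence function. -/
def h2 (x : ℝ) : ℝ := max 0 x ^ 2 / (1 + max 0 x ^ 2)

/-- h for the 1-Max(1) influence function. -/
def h1 (x : ℝ) : ℝ := max 0 x / (1 + max 0 x)

/-- 2-Max(1) influence function (used by QE). -/
def iotaQE (w s : ℝ) : ℝ := w - w * h2 (-s) + (1 - w) * h2 s

/-- Linear(1) influence function (used by DFQuAD). -/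
def iotaLin (w s : ℝ) : ℝ := w - w * max 0 (-s) + (1 - w) * max 0 s

/-- 1-Max(1) influence function (used by SD-DFQuAD). -/
def iotaSD (w s : ℝ) : ℝ := w - w * h1 (-s) + (1 - w) * h1 s

/-- Euler-based influence function (used by EB and EBT). -/
def iotaEB (w s : ℝ) : ℝ := 1 - (1 - w ^ 2) / (1 + w * Real.exp s)

/-- σ is a modular semantics with aggregation `agg` and influence `iota`:
on every well-formed acyclic QBAG the final strengths satisfy the defining equations. -/
def IsSemantics (agg : QBAG → (ℕ → ℝ) → ℕ → ℝ) (iota : ℝ → ℝ → ℝ)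
    (σ : QBAG → ℕ → ℝ) : Prop :=
  ∀ G : QBAG, G.WF → G.Acyclic → ∀ a ∈ G.args, σ G a = iota (G.tau a) (agg G (σ G) a)

/-- QE semantics. -/
def IsQE (σ : QBAG → ℕ → ℝ) : Prop := IsSemantics sumAgg iotaQE σ

/-- DFQuAD semantics. -/
def IsDF (σ : QBAG → ℕ → ℝ) : Prop := IsSemantics prodAgg iotaLin σ

/-- SD-DFQuAD semantics. -/
def IsSD (σ : QBAG → ℕ → ℝ) : Prop := IsSemantics prodAgg iotaSD σ

/-- EB semantics. -/
def IsEB (σ : QBAG → ℕ → ℝ) : Prop := IsSemantics sumAgg iotaEB σ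

/-- EBT semantics. -/
def IsEBT (σ : QBAG → ℕ → ℝ) : Prop := IsSemantics topAgg iotaEB σ

/-- A gradual semantics assigns final strengths in [0,1] on acyclic QBAGs. -/
def IsGradualSemantics (σ : QBAG → ℕ → ℝ) : Prop :=
  ∀ G : QBAG, G.WF → G.Acyclic → ∀ a ∈ G.args, σ G a ∈ Set.Icc (0 : ℝ) 1

/-- Removal-based contribution: ctrb^r_{G,a}(x) = σ_G(a) − σ_{G↓(A∖{x})}(a). -/
def ctrbR (σ : QBAG → ℕ → ℝ) (G : QBAG) (a x : ℕ) : ℝ :=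
  σ G a - σ (G.restrict (G.args.erase x)) a

/-- Intrinsic-removal contribution: ctrb^{ri}_{G,a}(x) = σ_{G⁻}(a) − σ_{G↓(A∖{x})}(a). -/
def ctrbRI (σ : QBAG → ℕ → ℝ) (G : QBAG) (a x : ℕ) : ℝ :=
  σ (G.dropInto x) a - σ (G.restrict (G.args.erase x)) a

/-- Shapley-based contribution. -/
def ctrbS (σ : QBAG → ℕ → ℝ) (G : QBAG) (a x : ℕ) : ℝ :=
  ∑ X ∈ ((G.args.erase a).erase x).powerset,
    ((X.card.factorial : ℝ) * ((G.args.erase a).card - X.card - 1).factorial /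
      (G.args.erase a).card.factorial) *
    (σ (G.restrict (G.args \ X)) a - σ (G.restrict (G.args \ insert x X)) a)

/-- Gradient-based contribution: the derivative at ε = τ(x) (within [0,1]) of
the map ε ↦ σ_{G[x←ε]}(a). -/
def ctrbG (σ : QBAG → ℕ → ℝ) (G : QBAG) (a x : ℕ) : ℝ :=
  derivWithin (fun ε => σ (G.setTau x ε) a) (Set.Icc (0 : ℝ) 1) (G.tau x)

/-- The contribution existence principle. -/
def ContributionExistence (ctrb : QBAG → ℕ → ℕ → ℝ) (σ : QBAG → ℕ → ℝ) : Prop :=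
  ∀ G : QBAG, G.WF → G.Acyclic → ∀ a ∈ G.args,
    σ G a ≠ G.tau a → ∃ x ∈ G.args, x ≠ a ∧ ctrb G a x ≠ 0

/-- The quantitative contribution existence principle. -/
def QuantContributionExistence (ctrb : QBAG → ℕ → ℕ → ℝ) (σ : QBAG → ℕ → ℝ) : Prop :=
  ∀ G : QBAG, G.WF → G.Acyclic → ∀ a ∈ G.args,
    ∑ x ∈ G.args.erase a, ctrb G a x = σ G a - G.tau a

/-- The strong faithfulness principle. -/
def StrongFaithfulness (ctrb : QBAG → ℕ → ℕ → ℝ) (σ : QBAG → ℕ → ℝ) : Prop :=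
  ∀ G : QBAG, G.WF → G.Acyclic → ∀ a ∈ G.args, ∀ x ∈ G.args,
    ∀ ε ∈ Set.Icc (0 : ℝ) 1,
      (ctrb G a x < 0 →
        (ε < G.tau x → σ G a < σ (G.setTau x ε) a) ∧
        (ε > G.tau x → σ G a > σ (G.setTau x ε) a)) ∧
      (ctrb G a x = 0 → σ G a = σ (G.setTau x ε) a) ∧
      (ctrb G a x > 0 →
        (ε < G.tau x → σ G a > σ (G.setTau x ε) a) ∧
        (ε > G.tau x → σ G a < σ (G.setTau x ε) a))

/-- The local faithfulness principle. -/
def LocalFaithfulness (ctrb : QBAG → ℕ → ℕ → ℝ) (σ : QBAG → ℕ → ℝ) : Prop :=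
  ∀ G : QBAG, G.WF → G.Acyclic → ∀ a ∈ G.args, ∀ x ∈ G.args,
    ∃ δ > 0, ∀ ε ∈ Set.Icc (G.tau x - δ) (G.tau x + δ) ∩ Set.Icc (0 : ℝ) 1,
      (ctrb G a x < 0 →
        (ε < G.tau x → σ G a < σ (G.setTau x ε) a) ∧
        (ε > G.tau x → σ G a > σ (G.setTau x ε) a)) ∧
      (ctrb G a x > 0 →
        (ε < G.tau x → σ G a > σ (G.setTau x ε) a) ∧
        (ε > G.tau x → σ G a < σ (G.setTau x ε) a))

/-- The quantitative local faithfulness principle: the map ε ↦ σ_{G[x←ε]}(a) is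
differentiable (within [0,1]) at τ(x) with derivative ctrb_{G,a}(x); equivalently
σ_{G[x←τ(x)+ε]}(a) = σ_G(a) + ε·ctrb_{G,a}(x) + e(ε) with e(ε)/ε → 0. -/
def QuantLocalFaithfulness (ctrb : QBAG → ℕ → ℕ → ℝ) (σ : QBAG → ℕ → ℝ) : Prop :=
  ∀ G : QBAG, G.WF → G.Acyclic → ∀ a ∈ G.args, ∀ x ∈ G.args,
    HasDerivWithinAt (fun ε => σ (G.setTau x ε) a) (ctrb G a x)
      (Set.Icc (0 : ℝ) 1) (G.tau x)

/-- The counterfactuality principle. -/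
def Counterfactuality (ctrb : QBAG → ℕ → ℕ → ℝ) (σ : QBAG → ℕ → ℝ) : Prop :=
  ∀ G : QBAG, G.WF → G.Acyclic → ∀ a ∈ G.args, ∀ x ∈ G.args,
    (ctrb G a x < 0 → σ G a < σ (G.restrict (G.args.erase x)) a) ∧
    (ctrb G a x = 0 → σ G a = σ (G.restrict (G.args.erase x)) a) ∧
    (ctrb G a x > 0 → σ G a > σ (G.restrict (G.args.erase x)) a)

/-- The quantitative counterfactuality principle. -/
def QuantCounterfactuality (ctrb : QBAG → ℕ → ℕ → ℝ) (σ : QBAG → ℕ → ℝ) : Prop :=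
  ∀ G : QBAG, G.WF → G.Acyclic → ∀ a ∈ G.args, ∀ x ∈ G.args,
    ctrb G a x = σ G a - σ (G.restrict (G.args.erase x)) a

end

/-! On the witness every argument other than `a` is unattacked, so with sum aggregation
`σ_G(a) = ι_{1/2}(-2)`, removing either attacker leaves `ι_{1/2}(-1)`, and
`σ_{G[b←ε]}(a) = ι_{1/2}(-(ε + 1))`. No edge points into `b` or `c`, so `ctrb^{ri} = ctrb^r`.
Quantitative contribution existence would thus force both
`2 (ι_{1/2}(-2) - ι_{1/2}(-1)) = ι_{1/2}(-2) - 1/2` and `-2 ι_{1/2}'(-2) = ι_{1/2}(-2) - 1/2`.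
For QE the three numbers are `1/10`, `1/4` and `2/25`; for EB both identities are refuted by
`e⁻¹ < 2/5`. -/

namespace QBAG

def attackStar (a : ℕ) (S : Finset ℕ) (τ : ℕ → ℝ) : QBAG where
  args := insert a S
  tau := τ
  att := S.image (·, a)
  supp := ∅

variable {a x : ℕ} {S : Finset ℕ} {τ : ℕ → ℝ}

lemma edge_attackStar {y z : ℕ} : (attackStar a S τ).edge y z ↔ y ∈ S ∧ z = a := by
  simp [edge, attackStar, eq_comm]

lemma attackStar_wf (hτ : ∀ y ∈ insert a S, τ y ∈ Set.Icc (0 : ℝ) 1) :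
    (attackStar a S τ).WF := by
  refine ⟨?_, by simp [attackStar], by simp [attackStar], hτ⟩
  simp +contextual [attackStar]

lemma attackStar_acyclic (ha : a ∉ S) : (attackStar a S τ).Acyclic := by
  intro y hy
  obtain ⟨z, hyz, -⟩ := Relation.TransGen.head'_iff.mp hy
  obtain ⟨w, -, hwy⟩ := Relation.TransGen.tail'_iff.mp hy
  rw [edge_attackStar] at hyz hwy
  exact ha (hwy.2 ▸ hyz.1)

lemma attackers_attackStar_self : (attackStar a S τ).attackers a = S := by
  ext y; simp [attackers, attackStar]

lemma attackers_attackStar_of_ne {y : ℕ} (hy : y ≠ a) : (attackStar a S τ).attackers y = ∅ := by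
  ext z; simp [attackers, attackStar, Ne.symm hy]

lemma supporters_attackStar (y : ℕ) : (attackStar a S τ).supporters y = ∅ := by
  simp [supporters, attackStar]

lemma restrict_attackStar_erase (hxa : x ≠ a) :
    (attackStar a S τ).restrict ((attackStar a S τ).args.erase x) = attackStar a (S.erase x) τ := by
  simp only [restrict, attackStar, mk.injEq, true_and]
  refine ⟨?_, ?_, Finset.filter_empty _⟩
  · ext y; by_cases hy : y = a <;> simp [hy, hxa.symm]
  · ext ⟨y, z⟩
    simp only [Finset.mem_filter, Finset.mem_image, Finset.mem_erase, Finset.mem_insert,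
      Prod.mk.injEq]
    grind

lemma dropInto_attackStar (hxa : x ≠ a) : (attackStar a S τ).dropInto x = attackStar a S τ := by
  simp only [dropInto, attackStar, mk.injEq, true_and]
  exact ⟨Finset.filter_true_of_mem (by simp [hxa.symm]), Finset.filter_empty _⟩

lemma setTau_attackStar (ε : ℝ) :
    (attackStar a S τ).setTau x ε = attackStar a S (Function.update τ x ε) := rfl

end QBAG

section SumSemantics

open QBAG

variable {ι : ℝ → ℝ → ℝ} {σ : QBAG → ℕ → ℝ} {a x : ℕ} {S : Finset ℕ} {τ : ℕ → ℝ}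

lemma IsSemantics.sumAgg_attackStar (hσ : IsSemantics sumAgg ι σ)
    (hι : ∀ w, 0 ≤ w → ι w 0 = w) (ha : a ∉ S)
    (hτ : ∀ y ∈ insert a S, τ y ∈ Set.Icc (0 : ℝ) 1) :
    σ (attackStar a S τ) a = ι (τ a) (-∑ y ∈ S, τ y) := by
  have hsem := hσ _ (attackStar_wf hτ) (attackStar_acyclic ha)
  have hS : ∀ y ∈ S, σ (attackStar a S τ) y = τ y := fun y hy => by
    have hya : y ≠ a := fun h => ha (h ▸ hy)
    rw [hsem y (Finset.mem_insert_of_mem hy), sumAgg, attackers_attackStar_of_ne hya,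
      supporters_attackStar]
    simpa [attackStar] using hι _ (hτ y (Finset.mem_insert_of_mem hy)).1
  rw [hsem a (Finset.mem_insert_self a S), sumAgg, attackers_attackStar_self,
    supporters_attackStar, Finset.sum_empty, zero_sub, Finset.sum_congr rfl hS]
  rfl

lemma ctrbRI_attackStar (hxa : x ≠ a) :
    ctrbRI σ (attackStar a S τ) a x = ctrbR σ (attackStar a S τ) a x := by
  rw [ctrbRI, ctrbR, dropInto_attackStar hxa]

lemma ctrbR_attackStar (hσ : IsSemantics sumAgg ι σ) (hι : ∀ w, 0 ≤ w → ι w 0 = w)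
    (ha : a ∉ S) (hτ : ∀ y ∈ insert a S, τ y ∈ Set.Icc (0 : ℝ) 1) (hx : x ∈ S) :
    ctrbR σ (attackStar a S τ) a x =
      ι (τ a) (-∑ y ∈ S, τ y) - ι (τ a) (-∑ y ∈ S.erase x, τ y) := by
  have hxa : x ≠ a := fun h => ha (h ▸ hx)
  have hτ' : ∀ y ∈ insert a (S.erase x), τ y ∈ Set.Icc (0 : ℝ) 1 := fun y hy =>
    hτ y (Finset.insert_subset_insert a (Finset.erase_subset x S) hy)
  rw [ctrbR, restrict_attackStar_erase hxa, hσ.sumAgg_attackStar hι ha hτ,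
    hσ.sumAgg_attackStar hι (fun h => ha (Finset.mem_of_mem_erase h)) hτ']

lemma ctrbG_attackStar (hσ : IsSemantics sumAgg ι σ) (hι : ∀ w, 0 ≤ w → ι w 0 = w)
    (ha : a ∉ S) (hτ : ∀ y ∈ insert a S, τ y ∈ Set.Icc (0 : ℝ) 1) (hx : x ∈ S) {D : ℝ}
    (hD : HasDerivAt (fun ε => ι (τ a) (-(ε + ∑ y ∈ S.erase x, τ y))) D (τ x)) :
    ctrbG σ (attackStar a S τ) a x = D := by
  have hxa : x ≠ a := fun h => ha (h ▸ hx)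
  have hτx : τ x ∈ Set.Icc (0 : ℝ) 1 := hτ x (Finset.mem_insert_of_mem hx)
  have hset : ∀ ε ∈ Set.Icc (0 : ℝ) 1,
      σ ((attackStar a S τ).setTau x ε) a = ι (τ a) (-(ε + ∑ y ∈ S.erase x, τ y)) := by
    intro ε hε
    have hτε : ∀ y ∈ insert a S, Function.update τ x ε y ∈ Set.Icc (0 : ℝ) 1 := fun y hy => by
      by_cases hyx : y = x
      · simpa [hyx] using hε
      · simpa [hyx] using hτ y hy
    rw [setTau_attackStar, hσ.sumAgg_attackStar hι ha hτε, Function.update_of_ne hxa.symm,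
      Finset.sum_update_of_mem hx, Finset.sdiff_singleton_eq_erase]
  calc ctrbG σ (attackStar a S τ) a x
      = derivWithin (fun ε => ι (τ a) (-(ε + ∑ y ∈ S.erase x, τ y))) (Set.Icc 0 1) (τ x) :=
        derivWithin_congr hset (hset _ hτx)
    _ = D := hD.hasDerivWithinAt.derivWithin (uniqueDiffOn_Icc zero_lt_one _ hτx)

-- The arguments a, b, c of the paper's witness are 0, 1, 2.
lemma exists_violation_of_sumAgg (hσ : IsSemantics sumAgg ι σ) (hι : ∀ w, 0 ≤ w → ι w 0 = w)
    {D : ℝ} (hD : HasDerivAt (ι (1 / 2)) D (-2))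
    (hR : 2 * (ι (1 / 2) (-2) - ι (1 / 2) (-1)) ≠ ι (1 / 2) (-2) - 1 / 2)
    (hG : 2 * -D ≠ ι (1 / 2) (-2) - 1 / 2) :
    ∃ G : QBAG, G.WF ∧ G.Acyclic ∧ ∃ a ∈ G.args,
      (∑ x ∈ G.args.erase a, ctrbR σ G a x) ≠ σ G a - G.tau a ∧
      (∑ x ∈ G.args.erase a, ctrbRI σ G a x) ≠ σ G a - G.tau a ∧
      (∑ x ∈ G.args.erase a, ctrbG σ G a x) ≠ σ G a - G.tau a := by
  set τ : ℕ → ℝ := fun n => if n = 0 then 1 / 2 else 1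
  set G := attackStar 0 {1, 2} τ
  have ha : 0 ∉ ({1, 2} : Finset ℕ) := by decide
  have hτ : ∀ y ∈ insert 0 ({1, 2} : Finset ℕ), τ y ∈ Set.Icc (0 : ℝ) 1 := by norm_num [τ]
  have hσa : σ G 0 = ι (1 / 2) (-2) := by
    rw [hσ.sumAgg_attackStar hι ha hτ]; norm_num [τ]
  have hctrbR : ∀ x ∈ ({1, 2} : Finset ℕ), ctrbR σ G 0 x = ι (1 / 2) (-2) - ι (1 / 2) (-1) := by
    intro x hx
    rw [ctrbR_attackStar hσ hι ha hτ hx]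
    fin_cases hx <;> norm_num [τ]
  have hctrbRI : ∀ x ∈ ({1, 2} : Finset ℕ), ctrbRI σ G 0 x = ι (1 / 2) (-2) - ι (1 / 2) (-1) :=
    fun x hx => (ctrbRI_attackStar (by rintro rfl; exact ha hx)).trans (hctrbR x hx)
  have hD' : HasDerivAt (fun ε => ι (1 / 2) (-(ε + 1))) (-D) 1 := by
    have hin : HasDerivAt (fun ε : ℝ => -(ε + 1)) (-1) 1 := ((hasDerivAt_id 1).add_const 1).neg
    simpa [Function.comp_def] using HasDerivAt.comp_of_eq 1 hD hin (by norm_num)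
  have hctrbG : ∀ x ∈ ({1, 2} : Finset ℕ), ctrbG σ G 0 x = -D := by
    intro x hx
    refine ctrbG_attackStar hσ hι ha hτ hx ?_
    fin_cases hx <;> simpa [τ] using hD'
  have hτa : G.tau 0 = 1 / 2 := rfl
  have hargs : G.args.erase 0 = {1, 2} := Finset.erase_insert ha
  have h12 : (1 : ℕ) ≠ 2 := by decide
  refine ⟨G, attackStar_wf hτ, attackStar_acyclic ha, 0, Finset.mem_insert_self _ _, ?_, ?_, ?_⟩
  · rwa [hargs, Finset.sum_congr rfl hctrbR, Finset.sum_pair h12, hσa, hτa, ← two_mul]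
  · rwa [hargs, Finset.sum_congr rfl hctrbRI, Finset.sum_pair h12, hσa, hτa, ← two_mul]
  · rwa [hargs, Finset.sum_congr rfl hctrbG, Finset.sum_pair h12, hσa, hτa, ← two_mul]

end SumSemantics

lemma iotaQE_zero (w : ℝ) : iotaQE w 0 = w := by
  simp [iotaQE, h2]

lemma hasDerivAt_iotaQE_of_neg {w s : ℝ} (hs : s < 0) :
    HasDerivAt (iotaQE w) (-(w * (2 * s / (1 + s ^ 2) ^ 2))) s := by
  have hsq := hasDerivAt_pow 2 s
  have hquot : HasDerivAt (fun t => t ^ 2 / (1 + t ^ 2)) (2 * s / (1 + s ^ 2) ^ 2) s := by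
    refine (hsq.div (hsq.const_add 1) (by positivity)).congr_deriv ?_
    field_simp
    ring
  refine ((hquot.const_mul w).const_sub w).congr_of_eventuallyEq ?_
  filter_upwards [Iio_mem_nhds hs] with t (ht : t < 0)
  simp [iotaQE, h2, max_eq_left ht.le, max_eq_right (neg_nonneg.mpr ht.le)]

lemma iotaEB_zero {w : ℝ} (hw : 0 ≤ w) : iotaEB w 0 = w := by
  have : 1 + w ≠ 0 := by positivity
  rw [iotaEB, Real.exp_zero, mul_one]
  field_simp
  ring

lemma hasDerivAt_iotaEB {w : ℝ} (hw : 0 ≤ w) (s : ℝ) :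
    HasDerivAt (iotaEB w) ((1 - w ^ 2) * (w * Real.exp s) / (1 + w * Real.exp s) ^ 2) s := by
  have hden := ((Real.hasDerivAt_exp s).const_mul w).const_add 1
  refine (((hasDerivAt_const s (1 - w ^ 2)).div hden (by positivity)).const_sub 1).congr_deriv ?_
  ring

lemma iotaEB_half_neg_two_sub_half_lt_two_mul_sub :
    iotaEB (1 / 2) (-2) - 1 / 2 < 2 * (iotaEB (1 / 2) (-2) - iotaEB (1 / 2) (-1)) := by
  have hu : Real.exp (-1) < 2 / 5 := Real.exp_neg_one_lt_d9.trans (by norm_num)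
  have hv := Real.exp_pos (-2)
  have hB : 5 / 8 < (1 - (1 / 2) ^ 2) / (1 + 1 / 2 * Real.exp (-1)) := by
    rw [lt_div_iff₀ (by positivity)]; linarith
  have hA : (1 - (1 / 2) ^ 2) / (1 + 1 / 2 * Real.exp (-2)) ≤ 3 / 4 := by
    rw [div_le_iff₀ (by positivity)]; linarith
  simp only [iotaEB]
  linarith

lemma iotaEB_half_neg_two_sub_half_lt_two_mul_neg_deriv :
    iotaEB (1 / 2) (-2) - 1 / 2 <
      2 * -((1 - (1 / 2) ^ 2) * (1 / 2 * Real.exp (-2)) / (1 + 1 / 2 * Real.exp (-2)) ^ 2) := by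
  have hv : Real.exp (-2) < 1 / 5 := by
    have hu : Real.exp (-1) < 2 / 5 := Real.exp_neg_one_lt_d9.trans (by norm_num)
    rw [show (-2 : ℝ) = -1 + -1 by norm_num, Real.exp_add]
    nlinarith [Real.exp_pos (-1)]
  have hv₀ := Real.exp_pos (-2)
  have hD : (1 - (1 / 2) ^ 2) * (1 / 2 * Real.exp (-2)) / (1 + 1 / 2 * Real.exp (-2)) ^ 2 ≤
      3 / 8 * Real.exp (-2) := by
    rw [div_le_iff₀ (by positivity)]; nlinarith [mul_pos hv₀ hv₀, pow_pos hv₀ 3]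
  have hA : 13 / 20 < (1 - (1 / 2) ^ 2) / (1 + 1 / 2 * Real.exp (-2)) := by
    rw [lt_div_iff₀ (by positivity)]; linarith
  simp only [iotaEB]
  linarith

/-- Each of ctrb^r, ctrb^{ri}, and ctrb^g violates quantitative
contribution existence w.r.t. the QE semantics and w.r.t. the EB semantics: there exist
an acyclic QBAG G and a ∈ A such that the sum of contributions to a differs from
σ_G(a) − τ(a). -/
theorem ctrbR_ctrbRI_ctrbG_violate_quant_contribution_existence_QE_EB :
    ∀ σ : QBAG → ℕ → ℝ, (IsQE σ ∨ IsEB σ) →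
      ∃ G : QBAG, G.WF ∧ G.Acyclic ∧ ∃ a ∈ G.args,
        (∑ x ∈ G.args.erase a, ctrbR σ G a x) ≠ σ G a - G.tau a ∧
        (∑ x ∈ G.args.erase a, ctrbRI σ G a x) ≠ σ G a - G.tau a ∧
        (∑ x ∈ G.args.erase a, ctrbG σ G a x) ≠ σ G a - G.tau a := by
  rintro σ (hQE | hEB)
  · refine exists_violation_of_sumAgg hQE (fun w _ => iotaQE_zero w)
      (hasDerivAt_iotaQE_of_neg (by norm_num)) ?_ ?_ <;> norm_num [iotaQE, h2]
  · exact exists_violation_of_sumAgg hEB (fun _ => iotaEB_zero)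
      (hasDerivAt_iotaEB (by norm_num) _) iotaEB_half_neg_two_sub_half_lt_two_mul_sub.ne'
      iotaEB_half_neg_two_sub_half_lt_two_mul_neg_deriv.ne'
end

section
/- The gradient-based contribution function ctrb^g satisfies the quantitative local faithfulness principle with respect to the QE semantics and with respect to the EB semantics: for every acyclic QBAG G and arguments a, x ∈ A, under QE (respectively EB) semantics the map ε ↦ σ_{G[x←ε]}(a) is differentiable at τ(x), so that σ_{G[x←τ(x)+ε]}(a) = σ_G(a) + ε·ctrb^g_{G,a}(x) + e(ε) with e(ε)/ε → 0 as ε → 0. -/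
open Finset

/-! Along a topological order each final strength is `ι_{τ(a)}` applied to a sum of final strengths
of parents, so well-founded induction along the acyclic edge relation shows that every
`ε ↦ σ_{G[x←ε]}(a)` is differentiable at `τ(x)`, provided the influence function is differentiable
on `[0,1] × ℝ`. For QE this comes down to `max 0 s ^ 2` being differentiable at `0`; for EB the
denominator `1 + w e^s` is positive when `w ≥ 0`. -/

namespace QBAG

variable {G : QBAG} {x y a : ℕ} {ε : ℝ}

lemma WF.tau_mem (hWF : G.WF) (ha : a ∈ G.args) : G.tau a ∈ Set.Icc (0 : ℝ) 1 :=
  hWF.2.2.2 a ha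

lemma Acyclic.setTau (hAc : G.Acyclic) : (G.setTau x ε).Acyclic := hAc

lemma WF.setTau (hWF : G.WF) (hε : ε ∈ Set.Icc (0 : ℝ) 1) : (G.setTau x ε).WF := by
  obtain ⟨hatt, hsupp, hdisj, htau⟩ := hWF
  refine ⟨hatt, hsupp, hdisj, fun b hb => ?_⟩
  rcases eq_or_ne b x with rfl | hbx
  · simpa [QBAG.setTau] using hε
  · simpa [QBAG.setTau, hbx] using htau b hb

lemma mem_att_of_mem_attackers (h : y ∈ G.attackers a) : (y, a) ∈ G.att := by
  simpa [attackers] using h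

lemma mem_supp_of_mem_supporters (h : y ∈ G.supporters a) : (y, a) ∈ G.supp := by
  simpa [supporters] using h

open scoped Classical in
/-- The ancestors of `a`: every ancestor is the source of some edge, which bounds them by a
finite set. -/
noncomputable def ancestors (G : QBAG) (a : ℕ) : Finset ℕ :=
  ((G.att ∪ G.supp).image Prod.fst).filter (Relation.TransGen G.edge · a)

open scoped Classical in
lemma card_ancestors_lt (hAc : G.Acyclic) (h : G.edge y a) :
    (G.ancestors y).card < (G.ancestors a).card := by
  refine card_lt_card ⟨fun z hz => ?_, fun hsub => ?_⟩
  · simp only [ancestors, mem_filter] at hz ⊢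
    exact ⟨hz.1, hz.2.tail h⟩
  · have hy : y ∈ G.ancestors a := by
      simp only [ancestors, mem_filter, mem_image, mem_union]
      exact ⟨⟨(y, a), h, rfl⟩, .single h⟩
    exact hAc y (mem_filter.mp (hsub hy)).2

lemma Acyclic.wellFounded_edge (hAc : G.Acyclic) : WellFounded G.edge :=
  Subrelation.wf (card_ancestors_lt hAc) (measure fun a => (G.ancestors a).card).wf

end QBAG

lemma hasDerivAt_max_zero_sq (t : ℝ) :
    HasDerivAt (fun y : ℝ => max 0 y ^ 2) (2 * max 0 t) t := by
  refine hasDerivAt_of_hasDerivAt_of_ne' (f := fun y : ℝ => max 0 y ^ 2) (g := fun y => 2 * max 0 y)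
    (x := 0) (fun y hy => ?_) (by fun_prop) (by fun_prop) t
  rcases hy.lt_or_gt with hy | hy
  · have hzero : (fun y : ℝ => max 0 y ^ 2) =ᶠ[nhds y] fun _ => 0 := by
      filter_upwards [Iio_mem_nhds hy] with z hz
      simp [max_eq_left (show z ≤ 0 from le_of_lt hz)]
    simpa [max_eq_left hy.le] using (hasDerivAt_const y (0 : ℝ)).congr_of_eventuallyEq hzero
  · have hsq : (fun y : ℝ => max 0 y ^ 2) =ᶠ[nhds y] fun z => z ^ 2 := by
      filter_upwards [Ioi_mem_nhds hy] with z hz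
      simp [max_eq_right (show 0 ≤ z from le_of_lt hz)]
    simpa [max_eq_right hy.le] using (hasDerivAt_pow 2 y).congr_of_eventuallyEq hsq

@[fun_prop]
lemma differentiable_h2 : Differentiable ℝ h2 := by
  have hsq : Differentiable ℝ (fun y : ℝ => max 0 y ^ 2) :=
    fun x => (hasDerivAt_max_zero_sq x).differentiableAt
  exact hsq.div (hsq.const_add 1) fun x => by positivity

lemma differentiable_iotaQE : Differentiable ℝ (Function.uncurry iotaQE) := by
  unfold Function.uncurry iotaQE
  fun_prop

lemma differentiableAt_iotaEB {w : ℝ} (hw : 0 ≤ w) (s : ℝ) :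
    DifferentiableAt ℝ (Function.uncurry iotaEB) (w, s) := by
  show DifferentiableAt ℝ (fun p : ℝ × ℝ => 1 - (1 - p.1 ^ 2) / (1 + p.1 * Real.exp p.2)) (w, s)
  fun_prop (disch := positivity)

theorem IsSemantics.differentiableWithinAt_setTau {iota : ℝ → ℝ → ℝ}
    (hiota : ∀ w ∈ Set.Icc (0 : ℝ) 1, ∀ s, DifferentiableAt ℝ (Function.uncurry iota) (w, s))
    {σ : QBAG → ℕ → ℝ} (hσ : IsSemantics sumAgg iota σ) {G : QBAG} (hWF : G.WF)
    (hAc : G.Acyclic) {x : ℕ} (hx : x ∈ G.args) (a : ℕ) (ha : a ∈ G.args) :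
    DifferentiableWithinAt ℝ (fun ε => σ (G.setTau x ε) a) (Set.Icc 0 1) (G.tau x) := by
  induction a using hAc.wellFounded_edge.induction with
  | h a ih =>
  have hparent : ∀ y ∈ G.supporters a ∪ G.attackers a,
      DifferentiableWithinAt ℝ (fun ε => σ (G.setTau x ε) y) (Set.Icc 0 1) (G.tau x) := by
    intro y hy
    rcases mem_union.mp hy with hy | hy
    · have hya := QBAG.mem_supp_of_mem_supporters hy
      exact ih y (.inr hya) (hWF.2.1 _ hya).1
    · have hya := QBAG.mem_att_of_mem_attackers hy
      exact ih y (.inl hya) (hWF.1 _ hya).1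
  have hagg : DifferentiableWithinAt ℝ (fun ε => sumAgg G (σ (G.setTau x ε)) a)
      (Set.Icc 0 1) (G.tau x) :=
    .sub (.fun_sum fun y hy => hparent y (mem_union_left _ hy))
      (.fun_sum fun y hy => hparent y (mem_union_right _ hy))
  have htau : DifferentiableWithinAt ℝ (fun ε => Function.update G.tau x ε a)
      (Set.Icc 0 1) (G.tau x) := by
    rcases eq_or_ne a x with rfl | hax
    · simp only [Function.update_self]
      fun_prop
    · simpa [hax] using differentiableWithinAt_const _
  have hequation : ∀ ε ∈ Set.Icc (0 : ℝ) 1, σ (G.setTau x ε) a =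
      iota (Function.update G.tau x ε a) (sumAgg G (σ (G.setTau x ε)) a) :=
    fun ε hε => hσ _ (hWF.setTau hε) hAc.setTau a ha
  refine DifferentiableWithinAt.congr ?_ hequation (hequation _ (hWF.tau_mem hx))
  have hτa : Function.update G.tau x (G.tau x) a ∈ Set.Icc (0 : ℝ) 1 := by
    simpa using hWF.tau_mem ha
  exact (hiota _ hτa (sumAgg G (σ (G.setTau x (G.tau x))) a)).comp_differentiableWithinAt
    (G.tau x) (htau.prodMk hagg)

theorem IsSemantics.quantLocalFaithfulness_ctrbG {iota : ℝ → ℝ → ℝ}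
    (hiota : ∀ w ∈ Set.Icc (0 : ℝ) 1, ∀ s, DifferentiableAt ℝ (Function.uncurry iota) (w, s))
    {σ : QBAG → ℕ → ℝ} (hσ : IsSemantics sumAgg iota σ) :
    QuantLocalFaithfulness (ctrbG σ) σ := fun _G hWF hAc a ha _x hx =>
  (hσ.differentiableWithinAt_setTau hiota hWF hAc hx a ha).hasDerivWithinAt

/-- The gradient-based contribution function satisfies quantitative local
faithfulness w.r.t. the QE semantics and w.r.t. the EB semantics: the map
ε ↦ σ_{G[x←ε]}(a) is differentiable at τ(x) (within [0,1]) with derivative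
ctrb^g_{G,a}(x), i.e. σ_{G[x←τ(x)+ε]}(a) = σ_G(a) + ε·ctrb^g_{G,a}(x) + e(ε) with
e(ε)/ε → 0 as ε → 0. -/
theorem ctrbG_satisfies_quant_local_faithfulness_QE_EB
    (σ : QBAG → ℕ → ℝ) (hσ : IsQE σ ∨ IsEB σ) :
    QuantLocalFaithfulness (ctrbG σ) σ := by
  rcases hσ with hQE | hEB
  · exact hQE.quantLocalFaithfulness_ctrbG fun w _ s => differentiable_iotaQE (w, s)
  · exact hEB.quantLocalFaithfulness_ctrbG fun w hw s => differentiableAt_iotaEB hw.1 s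
end
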